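/- Let K ⊆ ℂ^p be a determining compact set and let (ξ_j)_{j≥0} be a pseudo Leja sequence for K with Edrei growth (M_j)_{j≥1}. Assume (as guaranteed by Zaharjuta's theorem on the transfinite diameter) that there exists D ≥ 0 such that lim_{d→∞} V_{h_d}(K)^{1/l_d} = D and lim_{d→∞} (∏_{j=1}^{h_d−1} θ_j(K))^{1/l_d} = D. Then lim_{d→∞} |vdm(ξ_0,…,ξ_{h_d−1})|^{1/l_d} = D, i.e. the pseudo Leja sequence recovers the transfinite diameter D = D(K) of K. -/

import Mathlib

open scoped BigOperators
open Filter

namespace PseudoLeja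

/-- Graded lexicographic strict order on multi-indices in `ℕ^p`:
`α ≺ β` iff `|α| < |β|`, or `|α| = |β|` and the leftmost nonzero entry of `α - β`
is negative (i.e. at the first index where they differ, `α` is smaller). -/
def GLexLT {p : ℕ} (α β : Fin p → ℕ) : Prop :=
  (∑ i, α i) < (∑ i, β i) ∨
    ((∑ i, α i) = (∑ i, β i) ∧ ∃ k, (∀ i, i < k → α i = β i) ∧ α k < β k)

/-- `κ : ℕ → ℕ^p` is the (unique) enumeration of all multi-indices that is strictly
increasing from the usual order on `ℕ` to the graded lexicographic order. -/
def IsGLexEnum {p : ℕ} (κ : ℕ → Fin p → ℕ) : Prop :=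
  Function.Bijective κ ∧ ∀ m n : ℕ, m < n → GLexLT (κ m) (κ n)

/-- The `N`-th monomial `e_N(z) = z^{κ(N)}`. -/
noncomputable def mono {p : ℕ} (κ : ℕ → Fin p → ℕ) (N : ℕ) (z : Fin p → ℂ) : ℂ :=
  ∏ i, z i ^ κ N i

/-- Vandermonde determinant of the points `ξ 0, …, ξ (n-1)`:
`vdm κ n ξ = det [e_N(ξ_M)]_{0 ≤ M, N ≤ n-1}`. -/
noncomputable def vdm {p : ℕ} (κ : ℕ → Fin p → ℕ) (n : ℕ) (ξ : ℕ → Fin p → ℂ) : ℂ :=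
  Matrix.det (Matrix.of fun M N : Fin n => mono κ (N : ℕ) (ξ (M : ℕ)))

/-- A set `K ⊆ ℂ^p` is determining if no nonzero polynomial in `p` complex
variables vanishes identically on `K`. -/
def Determining {p : ℕ} (K : Set (Fin p → ℂ)) : Prop :=
  ∀ P : MvPolynomial (Fin p) ℂ, (∀ z ∈ K, MvPolynomial.eval z P = 0) → P = 0

/-- `h_d = C(p+d, d)`, the dimension of the space of polynomials of total degree
at most `d` in `p` variables. -/
def hdim (p d : ℕ) : ℕ := Nat.choose (p + d) d

/-- `l_d = p·C(p+d, p+1)`, the degree of the Vandermonde determinant of `h_d` points. -/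
def ldim (p d : ℕ) : ℕ := p * Nat.choose (p + d) (p + 1)

/-- `V_j(K)`, the maximal modulus of the Vandermonde determinant of `j` points of `K`. -/
noncomputable def Vsup {p : ℕ} (κ : ℕ → Fin p → ℕ) (K : Set (Fin p → ℂ)) (j : ℕ) : ℝ :=
  sSup { v : ℝ | ∃ ξ : ℕ → Fin p → ℂ, (∀ i, ξ i ∈ K) ∧ v = ‖vdm κ j ξ‖ }

/-- `(ξ_j)_{j≥0} ⊆ K` is a pseudo Leja sequence for `K` with Edrei growth `(M_j)_{j≥1}`:
`M_j ≥ 1`, `M_j·|vdm(ξ_0,…,ξ_j)| ≥ max_{z∈K} |vdm(ξ_0,…,ξ_{j-1},z)|` for `j ≥ 1`, and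
`lim_{d→∞} (max_{h_{d-1} ≤ j < h_d} M_j)^{1/d} = 1`. -/
def IsPseudoLeja {p : ℕ} (κ : ℕ → Fin p → ℕ) (K : Set (Fin p → ℂ))
    (ξ : ℕ → Fin p → ℂ) (M : ℕ → ℝ) : Prop :=
  (∀ j, ξ j ∈ K) ∧
  (∀ j, 1 ≤ j → 1 ≤ M j) ∧
  (∀ j, 1 ≤ j → ∀ z ∈ K,
    ‖vdm κ (j + 1) (Function.update ξ j z)‖ ≤
      M j * ‖vdm κ (j + 1) ξ‖) ∧
  Filter.Tendsto
    (fun d : ℕ => (sSup (M '' Set.Ico (hdim p (d - 1)) (hdim p d))) ^ ((d : ℝ)⁻¹))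
    Filter.atTop (nhds 1)

/-- `θ_j(K) = inf { max_{z∈K} |e_j(z) + ∑_{i<j} c_i e_i(z)| : c_0,…,c_{j-1} ∈ ℂ }`,
the `|κ(j)|`-th power of the `j`-th Chebyshev constant of `K`. -/
noncomputable def cheb {p : ℕ} (κ : ℕ → Fin p → ℕ) (K : Set (Fin p → ℂ)) (j : ℕ) : ℝ :=
  sInf { r : ℝ | ∃ c : ℕ → ℂ,
    r = sSup { s : ℝ | ∃ z ∈ K,
      s = ‖mono κ j z + ∑ i ∈ Finset.range j, c i * mono κ i z‖ } }

/-!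
Expanding `vdm(ξ_0, …, ξ_{j-1}, z)` along its last row gives
`vdm(ξ_0, …, ξ_{j-1}) · (e_j(z) + ∑_{i<j} c_i e_i(z))`, so the pseudo Leja inequality yields
`θ_j · |vdm(ξ_0, …, ξ_{j-1})| ≤ M_j · |vdm(ξ_0, …, ξ_j)|`, and telescoping
`∏_{1 ≤ j < h_d} θ_j ≤ (∏_{1 ≤ j < h_d} M_j) · |vdm(ξ_0, …, ξ_{h_d-1})| ≤ (∏ M_j) · V_{h_d}(K)`.
The Edrei condition says that the logarithm of the maximum of `M` over the `e`-th block
`[h_{e-1}, h_e)` is `o(e)`; since `l_d = ∑_{e ≤ d} e (h_e - h_{e-1})`, a Cesàro argument gives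
`log ∏_{j < h_d} M_j = o(l_d)`, and both bounds have `l_d`-th roots tending to `D`.
-/

theorem IsGLexEnum.apply_zero {p : ℕ} {κ : ℕ → Fin p → ℕ} (hκ : IsGLexEnum κ) : κ 0 = 0 := by
  obtain ⟨n, hn⟩ := hκ.1.2 0
  rcases Nat.eq_zero_or_pos n with rfl | hpos
  · exact hn
  · rcases hn ▸ hκ.2 0 n hpos with hlt | ⟨-, k, -, hk⟩
    · simp at hlt
    · simp at hk

theorem vdm_zero {p : ℕ} (κ : ℕ → Fin p → ℕ) (ξ : ℕ → Fin p → ℂ) : vdm κ 0 ξ = 1 :=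
  Matrix.det_fin_zero

theorem vdm_one {p : ℕ} {κ : ℕ → Fin p → ℕ} (h0 : κ 0 = 0) (ξ : ℕ → Fin p → ℂ) :
    vdm κ 1 ξ = 1 := by
  simp [vdm, mono, h0]

theorem bddAbove_norm_vdm {p : ℕ} (κ : ℕ → Fin p → ℕ) {K : Set (Fin p → ℂ)}
    (hK : IsCompact K) (n : ℕ) :
    BddAbove { v : ℝ | ∃ ξ : ℕ → Fin p → ℂ, (∀ i, ξ i ∈ K) ∧ v = ‖vdm κ n ξ‖ } := by
  let f : (Fin n → Fin p → ℂ) → ℝ := fun η =>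
    ‖Matrix.det (Matrix.of fun M N : Fin n => mono κ N (η M))‖
  have hf : Continuous f := by
    unfold f mono
    fun_prop
  refine ((isCompact_univ_pi fun _ => hK).bddAbove_image hf.continuousOn).mono ?_
  rintro v ⟨ξ, hξ, rfl⟩
  exact ⟨fun M => ξ M, fun M _ => hξ M, rfl⟩

theorem norm_vdm_le_Vsup {p : ℕ} (κ : ℕ → Fin p → ℕ) {K : Set (Fin p → ℂ)}
    (hK : IsCompact K) {ξ : ℕ → Fin p → ℂ} (hξ : ∀ i, ξ i ∈ K) (n : ℕ) :
    ‖vdm κ n ξ‖ ≤ Vsup κ K n :=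
  le_csSup (bddAbove_norm_vdm κ hK n) ⟨ξ, hξ, rfl⟩

theorem _root_.Matrix.exists_det_updateRow_last {R : Type*} [CommRing R] {n : ℕ}
    (A : Matrix (Fin (n + 1)) (Fin (n + 1)) R) :
    ∃ c : Fin n → R, ∀ v : Fin (n + 1) → R,
      (A.updateRow (Fin.last n) v).det =
        (A.submatrix Fin.castSucc Fin.castSucc).det * v (Fin.last n) +
          ∑ i, c i * v i.castSucc := by
  refine ⟨fun i => (-1) ^ (n + i : ℕ) *
    (A.submatrix Fin.castSucc (i.castSucc.succAbove)).det, fun v => ?_⟩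
  rw [Matrix.det_succ_row _ (Fin.last n), Fin.sum_univ_castSucc, add_comm]
  simp_rw [Matrix.updateRow_self, Matrix.submatrix_updateRow_succAbove, Fin.succAbove_last,
    Fin.val_last, Fin.val_castSucc, (Even.neg_one_pow ⟨n, rfl⟩ : (-1 : R) ^ (n + n) = 1)]
  congr 1
  · ring
  · exact Finset.sum_congr rfl fun i _ => by ring

theorem exists_vdm_update_eq {p : ℕ} (κ : ℕ → Fin p → ℕ) (j : ℕ) (ξ : ℕ → Fin p → ℂ) :
    ∃ c : ℕ → ℂ, ∀ z : Fin p → ℂ,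
      vdm κ (j + 1) (Function.update ξ j z) =
        vdm κ j ξ * mono κ j z + ∑ i ∈ Finset.range j, c i * mono κ i z := by
  let A : Matrix (Fin (j + 1)) (Fin (j + 1)) ℂ := Matrix.of fun M N => mono κ N (ξ M)
  obtain ⟨c, hc⟩ := A.exists_det_updateRow_last
  refine ⟨fun i => if h : i < j then c ⟨i, h⟩ else 0, fun z => ?_⟩
  have hrow : vdm κ (j + 1) (Function.update ξ j z) =
      (A.updateRow (Fin.last j) fun N => mono κ N z).det := by
    rw [vdm]
    congr 1
    ext M N
    rcases Fin.eq_castSucc_or_eq_last M with ⟨M, rfl⟩ | rfl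
    · simp [A, M.isLt.ne]
    · simp [A]
  rw [hrow, hc, Finset.sum_range]
  congr 1
  exact Finset.sum_congr rfl fun i _ => by simp [i.isLt]

theorem cheb_nonneg {p : ℕ} (κ : ℕ → Fin p → ℕ) (K : Set (Fin p → ℂ)) (j : ℕ) :
    0 ≤ cheb κ K j := by
  refine Real.sInf_nonneg fun r ⟨c, hr⟩ => hr ▸ Real.sSup_nonneg fun s ⟨z, _, hs⟩ => ?_
  exact hs ▸ norm_nonneg _

theorem cheb_le_of_forall_le {p : ℕ} {κ : ℕ → Fin p → ℕ} {K : Set (Fin p → ℂ)} {j : ℕ}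
    (c : ℕ → ℂ) {B : ℝ} (hB : 0 ≤ B)
    (h : ∀ z ∈ K, ‖mono κ j z + ∑ i ∈ Finset.range j, c i * mono κ i z‖ ≤ B) :
    cheb κ K j ≤ B := by
  calc cheb κ K j
      ≤ sSup { s : ℝ | ∃ z ∈ K,
          s = ‖mono κ j z + ∑ i ∈ Finset.range j, c i * mono κ i z‖ } := by
        refine csInf_le ⟨0, ?_⟩ ⟨c, rfl⟩
        rintro r ⟨c', rfl⟩
        exact Real.sSup_nonneg fun s ⟨z, _, hs⟩ => hs ▸ norm_nonneg _
    _ ≤ B := Real.sSup_le (fun s ⟨z, hz, hs⟩ => hs ▸ h z hz) hB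

theorem cheb_mul_norm_vdm_le {p : ℕ} {κ : ℕ → Fin p → ℕ} {K : Set (Fin p → ℂ)}
    {ξ : ℕ → Fin p → ℂ} {j : ℕ} {B : ℝ} (hB : 0 ≤ B)
    (h : ∀ z ∈ K, ‖vdm κ (j + 1) (Function.update ξ j z)‖ ≤ B) :
    cheb κ K j * ‖vdm κ j ξ‖ ≤ B := by
  by_cases hv : vdm κ j ξ = 0
  · simpa [hv] using hB
  obtain ⟨c, hc⟩ := exists_vdm_update_eq κ j ξ
  rw [← le_div_iff₀ (norm_pos_iff.2 hv)]
  refine cheb_le_of_forall_le (fun i => c i / vdm κ j ξ) (by positivity) fun z hz => ?_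
  have hquot : mono κ j z + ∑ i ∈ Finset.range j, c i / vdm κ j ξ * mono κ i z =
      vdm κ (j + 1) (Function.update ξ j z) / vdm κ j ξ := by
    rw [hc z, eq_div_iff hv, add_mul, Finset.sum_mul]
    congr 1
    · ring
    · exact Finset.sum_congr rfl fun i _ => by field_simp
  rw [hquot, norm_div]
  gcongr
  exact h z hz

theorem prod_cheb_le_prod_mul_norm_vdm {p : ℕ} {κ : ℕ → Fin p → ℕ} (h0 : κ 0 = 0)
    {K : Set (Fin p → ℂ)} {ξ : ℕ → Fin p → ℂ} {M : ℕ → ℝ} (hM : ∀ j, 1 ≤ j → 0 ≤ M j)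
    (hineq : ∀ j, 1 ≤ j → ∀ z ∈ K,
      ‖vdm κ (j + 1) (Function.update ξ j z)‖ ≤ M j * ‖vdm κ (j + 1) ξ‖) (n : ℕ) :
    ∏ j ∈ Finset.Ico 1 n, cheb κ K j ≤ (∏ j ∈ Finset.Ico 1 n, M j) * ‖vdm κ n ξ‖ := by
  induction n with
  | zero => simp [vdm_zero]
  | succ k ih =>
    rcases Nat.eq_zero_or_pos k with rfl | hk
    · simp [vdm_one h0]
    have hstep := cheb_mul_norm_vdm_le (mul_nonneg (hM k hk) (norm_nonneg _)) (hineq k hk)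
    have hprod : 0 ≤ ∏ j ∈ Finset.Ico 1 k, M j :=
      Finset.prod_nonneg fun j hj => hM j (Finset.mem_Ico.1 hj).1
    rw [Finset.prod_Ico_succ_top hk, Finset.prod_Ico_succ_top hk]
    calc (∏ j ∈ Finset.Ico 1 k, cheb κ K j) * cheb κ K k
        ≤ (∏ j ∈ Finset.Ico 1 k, M j) * ‖vdm κ k ξ‖ * cheb κ K k :=
          mul_le_mul_of_nonneg_right ih (cheb_nonneg κ K k)
      _ = (∏ j ∈ Finset.Ico 1 k, M j) * (cheb κ K k * ‖vdm κ k ξ‖) := by ring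
      _ ≤ (∏ j ∈ Finset.Ico 1 k, M j) * (M k * ‖vdm κ (k + 1) ξ‖) := by gcongr
      _ = _ := by ring

theorem hdim_succ (p d : ℕ) : hdim p (d + 1) = hdim p d + (p + d).choose (d + 1) := by
  rw [hdim, hdim, ← Nat.add_assoc, Nat.choose_succ_succ']

theorem one_le_hdim (p d : ℕ) : 1 ≤ hdim p d := Nat.choose_pos (by omega)

theorem hdim_le_succ (p d : ℕ) : hdim p d ≤ hdim p (d + 1) := by
  rw [hdim_succ]
  omega

theorem succ_mul_choose_eq_mul_choose (p d : ℕ) :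
    (d + 1) * (p + d).choose (d + 1) = p * (p + d).choose p := by
  rw [mul_comm, Nat.choose_succ_right_eq, Nat.add_sub_cancel, mul_comm,
    Nat.add_comm p d, Nat.choose_symm_add]

/-- The `e`-th block `[h_{e-1}, h_e)` consists of the indices `j` with `|κ j| = e` when
`e ≥ 1`; the truncated `0 - 1 = 0` makes block `0` empty. -/
def blockSize (p e : ℕ) : ℕ := hdim p e - hdim p (e - 1)

noncomputable def blockMax (p : ℕ) (M : ℕ → ℝ) (e : ℕ) : ℝ :=
  sSup (M '' Set.Ico (hdim p (e - 1)) (hdim p e))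

theorem blockSize_succ (p d : ℕ) : blockSize p (d + 1) = (p + d).choose (d + 1) := by
  rw [blockSize, Nat.add_sub_cancel, hdim_succ]
  omega

theorem one_le_blockSize {p : ℕ} (hp : 1 ≤ p) {e : ℕ} (he : 1 ≤ e) : 1 ≤ blockSize p e := by
  obtain ⟨d, rfl⟩ := Nat.exists_eq_add_of_le' he
  rw [blockSize_succ]
  exact Nat.choose_pos (by omega)

theorem sum_range_mul_blockSize (p d : ℕ) :
    ∑ e ∈ Finset.range (d + 1), e * blockSize p e = ldim p d := by
  induction d with
  | zero => simp [ldim]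
  | succ d ih =>
    rw [Finset.sum_range_succ, ih, blockSize_succ, succ_mul_choose_eq_mul_choose, ldim, ldim,
      ← Nat.add_assoc, Nat.choose_succ_succ', mul_add, Nat.add_comm]

theorem le_blockMax {p : ℕ} {M : ℕ → ℝ} {e j : ℕ} (hj : j ∈ Set.Ico (hdim p (e - 1)) (hdim p e)) :
    M j ≤ blockMax p M e :=
  le_csSup ((Set.finite_Ico _ _).image M).bddAbove ⟨j, hj, rfl⟩

theorem one_le_blockMax {p : ℕ} (hp : 1 ≤ p) {M : ℕ → ℝ} (hM : ∀ j, 1 ≤ j → 1 ≤ M j)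
    {e : ℕ} (he : 1 ≤ e) : 1 ≤ blockMax p M e := by
  have hne : hdim p (e - 1) < hdim p e := by
    have := one_le_blockSize hp he
    rw [blockSize] at this
    omega
  exact (hM _ (one_le_hdim p _)).trans (le_blockMax ⟨le_rfl, hne⟩)

theorem log_prod_le_sum_blockSize_mul_log_blockMax {p : ℕ} {M : ℕ → ℝ}
    (hM : ∀ j, 1 ≤ j → 1 ≤ M j) (d : ℕ) :
    Real.log (∏ j ∈ Finset.Ico 1 (hdim p d), M j) ≤
      ∑ e ∈ Finset.range (d + 1), (blockSize p e : ℝ) * Real.log (blockMax p M e) := by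
  rw [Real.log_prod fun j hj => (zero_lt_one.trans_le (hM j (Finset.mem_Ico.1 hj).1)).ne']
  induction d with
  | zero => simp [hdim, blockSize]
  | succ d ih =>
    rw [← Finset.sum_Ico_consecutive _ (one_le_hdim p d) (hdim_le_succ p d),
      Finset.sum_range_succ]
    refine add_le_add ih ?_
    have hblock : ∀ j ∈ Finset.Ico (hdim p d) (hdim p (d + 1)),
        Real.log (M j) ≤ Real.log (blockMax p M (d + 1)) := fun j hj =>
      have hj := Finset.mem_Ico.1 hj
      Real.log_le_log (zero_lt_one.trans_le (hM j ((one_le_hdim p d).trans hj.1)))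
        (le_blockMax (by simpa using hj))
    simpa [blockSize] using Finset.sum_le_card_nsmul _ _ _ hblock

open Asymptotics

theorem tendsto_rpow_inv_nhds_one_of_log_le {α : Type*} {F : Filter α} {P S L : α → ℝ}
    (hP : ∀ x, 1 ≤ P x) (hL : ∀ x, 0 ≤ L x) (hS : ∀ x, Real.log (P x) ≤ S x)
    (h : S =o[F] L) : Tendsto (fun x => P x ^ (L x)⁻¹) F (nhds 1) := by
  have hlog : Tendsto (fun x => Real.log (P x) * (L x)⁻¹) F (nhds 0) :=
    tendsto_of_tendsto_of_tendsto_of_le_of_le tendsto_const_nhds h.tendsto_div_nhds_zero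
      (fun x => mul_nonneg (Real.log_nonneg (hP x)) (inv_nonneg.2 (hL x)))
      (fun x => mul_le_mul_of_nonneg_right (hS x) (inv_nonneg.2 (hL x)))
  have hexp := (Real.continuous_exp.tendsto 0).comp hlog
  rw [Real.exp_zero] at hexp
  exact hexp.congr fun x => (Real.rpow_def_of_pos (zero_lt_one.trans_le (hP x)) _).symm

theorem isLittleO_log_of_tendsto_rpow_inv {a : ℕ → ℝ} (ha : ∀ᶠ e in atTop, 0 < a e)
    (h : Tendsto (fun e => a e ^ (e : ℝ)⁻¹) atTop (nhds 1)) :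
    (fun e => Real.log (a e)) =o[atTop] (fun e => (e : ℝ)) := by
  refine isLittleO_iff_tendsto' ?_ |>.2 ?_
  · filter_upwards [eventually_ge_atTop 1] with e he h0
    exact absurd h0 (by positivity)
  · have hlog := (Real.continuousAt_log one_ne_zero).tendsto.comp h
    rw [Real.log_one] at hlog
    refine hlog.congr' ?_
    filter_upwards [ha] with e he
    simp [Real.log_rpow he, div_eq_inv_mul]

theorem tendsto_prod_rpow_inv_ldim {p : ℕ} (hp : 1 ≤ p) {M : ℕ → ℝ}
    (hM : ∀ j, 1 ≤ j → 1 ≤ M j)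
    (hEdrei : Tendsto (fun d => blockMax p M d ^ (d : ℝ)⁻¹) atTop (nhds 1)) :
    Tendsto (fun d => (∏ j ∈ Finset.Ico 1 (hdim p d), M j) ^ (ldim p d : ℝ)⁻¹)
      atTop (nhds 1) := by
  set w : ℕ → ℝ := fun e => blockSize p e
  have hlog : (fun e => Real.log (blockMax p M e)) =o[atTop] (fun e => (e : ℝ)) :=
    isLittleO_log_of_tendsto_rpow_inv (eventually_ge_atTop 1 |>.mono fun e he =>
      zero_lt_one.trans_le (one_le_blockMax hp hM he)) hEdrei
  have hweighted := (isBigO_refl w atTop).mul_isLittleO hlog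
  have hdiv : Tendsto (fun n => ∑ e ∈ Finset.range n, w e * e) atTop atTop := by
    rw [← tendsto_add_atTop_iff_nat 1]
    refine tendsto_atTop_mono (fun n => ?_) tendsto_natCast_atTop_atTop
    have hn : (n : ℝ) ≤ w n * n := by
      rcases Nat.eq_zero_or_pos n with rfl | hn
      · simp
      · exact le_mul_of_one_le_left (Nat.cast_nonneg n)
          (Nat.one_le_cast.2 (one_le_blockSize hp hn))
    exact hn.trans (Finset.single_le_sum (f := fun e => w e * e) (fun e _ => by positivity)
      (Finset.self_mem_range_succ n))
  have hsum := (hweighted.sum_range (fun e => by positivity) hdiv).comp_tendsto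
    (tendsto_add_atTop_nat 1)
  refine tendsto_rpow_inv_nhds_one_of_log_le (fun d => ?_) (fun d => by positivity)
    (log_prod_le_sum_blockSize_mul_log_blockMax hM) ?_
  · exact Finset.one_le_prod fun j hj => hM j (Finset.mem_Ico.1 hj).1
  · refine hsum.congr_right fun d => ?_
    simp [w, ← sum_range_mul_blockSize p d, mul_comm]

theorem rpow_div_rpow_le_of_le_mul {a b c r : ℝ} (ha : 0 ≤ a) (hb : 0 < b) (hc : 0 ≤ c)
    (hr : 0 ≤ r) (h : a ≤ b * c) : a ^ r / b ^ r ≤ c ^ r := by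
  rw [div_le_iff₀' (by positivity), ← Real.mul_rpow hb.le hc]
  exact Real.rpow_le_rpow ha h hr

theorem pseudoLeja_recovers_transfinite_diameter_general {p : ℕ} (hp : 1 ≤ p)
    (κ : ℕ → Fin p → ℕ) (hκ : IsGLexEnum κ)
    (K : Set (Fin p → ℂ)) (hKc : IsCompact K)
    (ξ : ℕ → Fin p → ℂ) (M : ℕ → ℝ) (hPL : IsPseudoLeja κ K ξ M)
    (D : ℝ)
    (hV : Filter.Tendsto (fun d : ℕ => (Vsup κ K (hdim p d)) ^ ((ldim p d : ℝ)⁻¹))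
      Filter.atTop (nhds D))
    (hθ : Filter.Tendsto
      (fun d : ℕ => (∏ j ∈ Finset.Ico 1 (hdim p d), cheb κ K j) ^ ((ldim p d : ℝ)⁻¹))
      Filter.atTop (nhds D)) :
    Filter.Tendsto
      (fun d : ℕ => ‖vdm κ (hdim p d) ξ‖ ^ ((ldim p d : ℝ)⁻¹))
      Filter.atTop (nhds D) := by
  obtain ⟨hmem, hM, hineq, hEdrei⟩ := hPL
  have hP := tendsto_prod_rpow_inv_ldim hp hM hEdrei
  have hlower : ∀ d : ℕ,
      (∏ j ∈ Finset.Ico 1 (hdim p d), cheb κ K j) ^ (ldim p d : ℝ)⁻¹ /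
          (∏ j ∈ Finset.Ico 1 (hdim p d), M j) ^ (ldim p d : ℝ)⁻¹ ≤
        ‖vdm κ (hdim p d) ξ‖ ^ (ldim p d : ℝ)⁻¹ := fun d =>
    rpow_div_rpow_le_of_le_mul (Finset.prod_nonneg fun j _ => cheb_nonneg κ K j)
      (Finset.prod_pos fun j hj => zero_lt_one.trans_le (hM j (Finset.mem_Ico.1 hj).1))
      (norm_nonneg _) (by positivity)
      (prod_cheb_le_prod_mul_norm_vdm hκ.apply_zero (fun j hj => zero_le_one.trans (hM j hj))
        hineq (hdim p d))
  have hupper : ∀ d : ℕ, ‖vdm κ (hdim p d) ξ‖ ^ (ldim p d : ℝ)⁻¹ ≤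
      Vsup κ K (hdim p d) ^ (ldim p d : ℝ)⁻¹ := fun d =>
    Real.rpow_le_rpow (norm_nonneg _) (norm_vdm_le_Vsup κ hKc hmem _) (by positivity)
  refine tendsto_of_tendsto_of_tendsto_of_le_of_le ?_ hV hlower hupper
  exact div_one D ▸ hθ.div hP one_ne_zero

/-- a pseudo Leja sequence recovers the transfinite diameter `D = D(K)`:
if `V_{h_d}(K)^{1/l_d} → D` and `(∏_{j=1}^{h_d-1} θ_j(K))^{1/l_d} → D` (which hold, with
`D = D(K)`, by Zaharjuta's theorem), then `|vdm(ξ_0,…,ξ_{h_d-1})|^{1/l_d} → D`. -/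
theorem pseudoLeja_recovers_transfinite_diameter {p : ℕ} (hp : 1 ≤ p)
    (κ : ℕ → Fin p → ℕ) (hκ : IsGLexEnum κ)
    (K : Set (Fin p → ℂ)) (hKc : IsCompact K) (hKd : Determining K)
    (ξ : ℕ → Fin p → ℂ) (M : ℕ → ℝ) (hPL : IsPseudoLeja κ K ξ M)
    (D : ℝ) (hD : 0 ≤ D)
    (hV : Filter.Tendsto (fun d : ℕ => (Vsup κ K (hdim p d)) ^ ((ldim p d : ℝ)⁻¹))
      Filter.atTop (nhds D))
    (hθ : Filter.Tendsto
      (fun d : ℕ => (∏ j ∈ Finset.Ico 1 (hdim p d), cheb κ K j) ^ ((ldim p d : ℝ)⁻¹))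
      Filter.atTop (nhds D)) :
    Filter.Tendsto
      (fun d : ℕ => ‖vdm κ (hdim p d) ξ‖ ^ ((ldim p d : ℝ)⁻¹))
      Filter.atTop (nhds D) :=
  pseudoLeja_recovers_transfinite_diameter_general hp κ hκ K hKc ξ M hPL D hV hθ

end PseudoLeja
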